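/- arXiv:2509.01193 — 2 statements merged into one kernel-verified Lean document; each statement's English description precedes it below -/
import Mathlib

section
/- Consider a deployment plan with n ≥ 1 heterogeneous fine-tuning replicas, where replica i uses Nᵢ > 0 GPUs and has average per-GPU throughput T̄ᵢ, with T̄₁ ≥ T̄₂ ≥ ⋯ ≥ T̄ₙ > 0, and let N = ∑_{i=1}^{n} Nᵢ be the total number of GPUs. Let Mᵢ ≥ 0 be the token load of replica i under length-based data dispatching, with running times tᵢ = Mᵢ/(Nᵢ·T̄ᵢ). Suppose the data are re-dispatched to loads Mᵢ′ ≥ 0 satisfying ∑_{j=1}^{k} Mⱼ′ ≤ ∑_{j=1}^{k} Mⱼ for every k and ∑_{j=1}^{n} Mⱼ′ = ∑_{j=1}^{n} Mⱼ, yielding running times tᵢ′ = Mᵢ′/(Nᵢ·T̄ᵢ), and let t̂ = max_{1 ≤ i ≤ n} tᵢ′ denote the maximum running time after re-dispatching. Then N·t̂ ≥ ∑_{i=1}^{n} Nᵢ·tᵢ. -/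
/-!
Replica `i` needs `Mᵢ / T̄ᵢ` GPU-seconds for its load, so the right-hand side is `∑ Mᵢ / T̄ᵢ`.
Re-dispatching only moves tokens towards replicas later in the order, whose per-token cost
`1 / T̄ᵢ` is at least as large; by Abel summation the GPU-seconds can only grow, and they are
bounded by `N · t̂` because no replica runs longer than `t̂`.
-/

open Finset

theorem sum_mul_le_sum_mul_of_prefix_sum_le {R : Type*} [CommRing R] [LinearOrder R]
    [IsStrictOrderedRing R] {n : ℕ} {a b w : ℕ → R}
    (hprefix : ∀ k < n, ∑ j ∈ range (k + 1), b j ≤ ∑ j ∈ range (k + 1), a j)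
    (htotal : ∑ j ∈ range n, b j = ∑ j ∈ range n, a j)
    (hw : ∀ i, i + 1 < n → w i ≤ w (i + 1)) :
    ∑ i ∈ range n, a i * w i ≤ ∑ i ∈ range n, b i * w i := by
  have hparts := sum_range_by_parts w (fun i => a i - b i) n
  simp only [smul_eq_mul, sum_sub_distrib, htotal, sub_self, mul_zero, zero_sub] at hparts
  have hterm : ∀ i ∈ range (n - 1),
      0 ≤ (w (i + 1) - w i) * (∑ j ∈ range (i + 1), a j - ∑ j ∈ range (i + 1), b j) := by
    intro i hi
    have hi : i + 1 < n := by rw [mem_range] at hi; omega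
    exact mul_nonneg (sub_nonneg.2 (hw i hi)) (sub_nonneg.2 (hprefix i (by omega)))
  have hsum : ∑ i ∈ range n, w i * (a i - b i) ≤ 0 := by
    rw [hparts]
    exact neg_nonpos.2 (sum_nonneg hterm)
  simp only [mul_sub, sum_sub_distrib, sub_nonpos] at hsum
  simpa only [mul_comm] using hsum

theorem mul_div_mul_eq_div {K : Type*} [Field K] {N T : K} (hN : N ≠ 0) (M : K) :
    N * (M / (N * T)) = M / T := by
  rw [mul_div_assoc', mul_div_mul_left _ _ hN]

/-- For a deployment of `n` heterogeneous replicas sorted by descending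
per-GPU throughput, if the length-based loads `M` are re-dispatched to loads `M'`
satisfying the prefix-sum migration constraints and token conservation, then
`N * t̂ ≥ ∑ i, Nᵢ * tᵢ`, where `t̂` is the maximum running time after re-dispatching. -/
theorem gpu_seconds_lower_bound
    (n : ℕ) (hn : 1 ≤ n) (N T M M' : ℕ → ℝ)
    (hN : ∀ i, i < n → 0 < N i)
    (hT : ∀ i, i < n → 0 < T i)
    (hTmono : ∀ i j, i ≤ j → j < n → T j ≤ T i)
    (hprefix : ∀ k, k < n →
      ∑ j ∈ Finset.range (k + 1), M' j ≤ ∑ j ∈ Finset.range (k + 1), M j)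
    (htotal : ∑ j ∈ Finset.range n, M' j = ∑ j ∈ Finset.range n, M j) :
    (∑ i ∈ Finset.range n, N i)
        * ((Finset.range n).sup' (Finset.nonempty_range_iff.mpr (by omega))
            (fun i => M' i / (N i * T i)))
      ≥ ∑ i ∈ Finset.range n, N i * (M i / (N i * T i)) := by
  set t := (range n).sup' (nonempty_range_iff.mpr (by omega)) (fun i => M' i / (N i * T i))
  have hgpu_seconds (L : ℕ → ℝ) :
      ∑ i ∈ range n, N i * (L i / (N i * T i)) = ∑ i ∈ range n, L i * (T i)⁻¹ :=
    sum_congr rfl fun i hi => by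
      rw [mul_div_mul_eq_div (hN i (mem_range.1 hi)).ne', div_eq_mul_inv]
  have hcost_mono : ∀ i, i + 1 < n → (T i)⁻¹ ≤ (T (i + 1))⁻¹ := fun i hi =>
    inv_anti₀ (hT (i + 1) hi) (hTmono i (i + 1) i.le_succ hi)
  calc ∑ i ∈ range n, N i * (M i / (N i * T i))
      = ∑ i ∈ range n, M i * (T i)⁻¹ := hgpu_seconds M
    _ ≤ ∑ i ∈ range n, M' i * (T i)⁻¹ :=
        sum_mul_le_sum_mul_of_prefix_sum_le hprefix htotal hcost_mono
    _ = ∑ i ∈ range n, N i * (M' i / (N i * T i)) := (hgpu_seconds M').symm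
    _ ≤ ∑ i ∈ range n, N i * t :=
        sum_le_sum fun i hi => mul_le_mul_of_nonneg_left
          (le_sup' (fun i => M' i / (N i * T i)) hi) (hN i (mem_range.1 hi)).le
    _ = (∑ i ∈ range n, N i) * t := (sum_mul ..).symm
end

section
/- Fix pre-defined interval boundaries u₁ < u₂ < ⋯ < u_U (positive integers) and nonnegative integer counts c₁, …, c_U, where cₘ is the number of sequences whose length falls in the m-th interval. Define the inter-interval padding cost of a bucketing 0 = i₀ ≤ i₁ ≤ ⋯ ≤ i_R = U (a nondecreasing sequence of indices selecting at most R bucket boundaries u_{i₁}, …, u_{i_R}) as ∑_{k=1}^{R} ∑_{m=i_{k−1}+1}^{i_k} cₘ·(u_{i_k} − uₘ). Define State by the dynamic program: State_{0,j} = 0 for all j ∈ {0, …, R}; State_{i,0} = +∞ for all i ∈ {1, …, U}; and State_{i+1,j+1} = min_{i′ ∈ {0,…,i}} { State_{i′,j} + ∑_{i″=i′+1}^{i} c_{i″}·(u_{i+1} − u_{i″}) } (with the convention that the inner sum is 0 when i′ = i). Then for every R with 1 ≤ R ≤ U, State_{U,R} equals the minimum inter-interval padding cost over all bucketings 0 =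 i₀ ≤ i₁ ≤ ⋯ ≤ i_R = U. -/
open scoped BigOperators

/-- The dynamic-programming table for dynamic bucketing:
`dpState u c i j` is the minimized inter-interval padding when bucketing the
first `i` intervals into `j` buckets.
`State_{0,j} = 0`, `State_{i,0} = +∞` for `i ≥ 1`, and
`State_{i+1,j+1} = min_{i' ∈ [0,i]} (State_{i',j} + ∑_{i''=i'+1}^{i} c_{i''} * (u_{i+1} - u_{i''}))`. -/
noncomputable def dpState (u c : ℕ → ℕ) : ℕ → ℕ → ℕ∞
  | i, 0 => if i = 0 then 0 else ⊤
  | 0, _ + 1 => 0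
  | i + 1, j + 1 =>
      ⨅ i' ∈ Finset.range (i + 1),
        (dpState u c i' j
          + ((∑ m ∈ Finset.Icc (i' + 1) i, c m * (u (i + 1) - u m) : ℕ) : ℕ∞))
  termination_by i j => j

namespace DpAux

/-- The set of achievable inter-interval padding costs for bucketing the first
`i` intervals into `J` buckets. -/
def S (u c : ℕ → ℕ) (i J : ℕ) : Set ℕ∞ :=
  { x : ℕ∞ | ∃ idx : ℕ → ℕ,
      idx 0 = 0 ∧ idx J = i ∧ (∀ k, k < J → idx k ≤ idx (k + 1)) ∧
      x = ((∑ k ∈ Finset.range J,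
              ∑ m ∈ Finset.Icc (idx k + 1) (idx (k + 1)),
                c m * (u (idx (k + 1)) - u m) : ℕ) : ℕ∞) }

lemma tail_eq (u c : ℕ → ℕ) {i' i₀ : ℕ} (h : i' ≤ i₀) :
    (∑ m ∈ Finset.Icc (i' + 1) (i₀ + 1), c m * (u (i₀ + 1) - u m))
      = ∑ m ∈ Finset.Icc (i' + 1) i₀, c m * (u (i₀ + 1) - u m) := by
  rw [← Finset.insert_Icc_right_eq_Icc_add_one (by omega : i' + 1 ≤ i₀ + 1),
    Finset.sum_insert (by simp)]
  simp


lemma dpState_zero_succ (u c : ℕ → ℕ) (j : ℕ) : dpState u c 0 (j + 1) = 0 := by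
  rw [dpState]

lemma dpState_succ_succ (u c : ℕ → ℕ) (i j : ℕ) :
    dpState u c (i + 1) (j + 1)
      = ⨅ i' ∈ Finset.range (i + 1),
          (dpState u c i' j
            + ((∑ m ∈ Finset.Icc (i' + 1) i, c m * (u (i + 1) - u m) : ℕ) : ℕ∞)) := by
  rw [dpState]

lemma S_nonempty (u c : ℕ → ℕ) (i J : ℕ) (hJ : 1 ≤ J) : (S u c i J).Nonempty := by
  refine ⟨_, fun k => if k = 0 then 0 else i, by simp, by simp [Nat.one_le_iff_ne_zero.mp hJ],
    ?_, rfl⟩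
  intro k hk
  by_cases hk0 : k = 0 <;> simp [hk0]

lemma sInf_S_zero (u c : ℕ → ℕ) (J : ℕ) : sInf (S u c 0 J) = 0 := by
  refine le_antisymm (sInf_le ?_) zero_le
  refine ⟨fun _ => 0, rfl, rfl, fun k _ => le_refl 0, ?_⟩
  simp

/-- `dpState` is antitone in the number of buckets. -/
lemma dpState_antitone (u c : ℕ → ℕ) : ∀ j i, dpState u c i (j + 1) ≤ dpState u c i j := by
  intro j
  induction j with
  | zero =>
    intro i
    match i with
    | 0 => simp [dpState]
    | i₀ + 1 => simp [dpState]
  | succ j ih =>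
    intro i
    match i with
    | 0 => simp [dpState_zero_succ]
    | i₀ + 1 =>
      rw [dpState_succ_succ, dpState_succ_succ]
      exact iInf₂_mono fun i' _ => add_le_add_left (ih i') _

/-- Main lemma: the DP computes the minimum cost. -/
lemma dpState_eq (u c : ℕ → ℕ) : ∀ j i, dpState u c i (j + 1) = sInf (S u c i (j + 1)) := by
  intro j
  induction j with
  | zero =>
    intro i
    match i with
    | 0 => rw [sInf_S_zero, dpState_zero_succ]
    | i₀ + 1 =>
      have hL : dpState u c (i₀ + 1) 1
          = ((∑ m ∈ Finset.Icc 1 i₀, c m * (u (i₀ + 1) - u m) : ℕ) : ℕ∞) := by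
        rw [dpState_succ_succ]
        apply le_antisymm
        · refine le_trans (iInf₂_le 0 (by simp)) ?_
          simp [dpState]
        · refine le_iInf₂ fun i' hi' => ?_
          match i' with
          | 0 => simp [dpState]
          | i'' + 1 => simp [dpState]
      rw [hL]
      have key : ∀ x ∈ S u c (i₀ + 1) 1,
          x = ((∑ m ∈ Finset.Icc 1 i₀, c m * (u (i₀ + 1) - u m) : ℕ) : ℕ∞) := by
        rintro x ⟨idx, h0, h1, _, rfl⟩
        rw [Finset.sum_range_succ, Finset.sum_range_zero, zero_add, h0, h1,
          tail_eq u c (Nat.zero_le i₀)]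
      apply le_antisymm
      · exact le_sInf fun x hx => (key x hx).ge
      · obtain ⟨x, hx⟩ := S_nonempty u c (i₀ + 1) 1 le_rfl
        rw [← key x hx]
        exact sInf_le hx
  | succ j ih =>
    intro i
    match i with
    | 0 => rw [sInf_S_zero, dpState_zero_succ]
    | i₀ + 1 =>
      rw [dpState_succ_succ]
      apply le_antisymm
      · -- dpState ≤ every cost
        refine le_sInf ?_
        rintro x ⟨idx, h0, hend, hmono, rfl⟩
        -- split off the last bucket
        have hsplit : (∑ k ∈ Finset.range (j + 2),
              ∑ m ∈ Finset.Icc (idx k + 1) (idx (k + 1)), c m * (u (idx (k + 1)) - u m))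
            = (∑ k ∈ Finset.range (j + 1),
              ∑ m ∈ Finset.Icc (idx k + 1) (idx (k + 1)), c m * (u (idx (k + 1)) - u m))
              + ∑ m ∈ Finset.Icc (idx (j + 1) + 1) (i₀ + 1), c m * (u (i₀ + 1) - u m) := by
          rw [Finset.sum_range_succ, hend]
        have hmem : ((∑ k ∈ Finset.range (j + 1),
              ∑ m ∈ Finset.Icc (idx k + 1) (idx (k + 1)),
                c m * (u (idx (k + 1)) - u m) : ℕ) : ℕ∞) ∈ S u c (idx (j + 1)) (j + 1) :=
          ⟨idx, h0, rfl, fun k hk => hmono k (by omega), rfl⟩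
        have hle : idx (j + 1) ≤ i₀ + 1 := hend ▸ hmono (j + 1) (by omega)
        by_cases hcase : idx (j + 1) ≤ i₀
        · -- nonempty (or proper) last bucket: use the infimum term at `idx (j+1)`
          refine le_trans (iInf₂_le (idx (j + 1)) (Finset.mem_range.mpr (by omega))) ?_
          rw [ih (idx (j + 1))]
          calc sInf (S u c (idx (j + 1)) (j + 1))
                + ((∑ m ∈ Finset.Icc (idx (j + 1) + 1) i₀,
                    c m * (u (i₀ + 1) - u m) : ℕ) : ℕ∞)
              ≤ ((∑ k ∈ Finset.range (j + 1),
                  ∑ m ∈ Finset.Icc (idx k + 1) (idx (k + 1)),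
                    c m * (u (idx (k + 1)) - u m) : ℕ) : ℕ∞)
                + ((∑ m ∈ Finset.Icc (idx (j + 1) + 1) i₀,
                    c m * (u (i₀ + 1) - u m) : ℕ) : ℕ∞) :=
                add_le_add_left (sInf_le hmem) _
            _ = _ := by
                rw [← Nat.cast_add, hsplit, tail_eq u c hcase]
        · -- empty last bucket: use antitonicity
          have hidx : idx (j + 1) = i₀ + 1 := by omega
          have h2 : (∑ m ∈ Finset.Icc (idx (j + 1) + 1) (i₀ + 1),
              c m * (u (i₀ + 1) - u m)) = 0 := by
            rw [hidx]; simp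
          rw [hsplit, h2, Nat.add_zero]
          rw [← dpState_succ_succ]
          refine le_trans (dpState_antitone u c (j + 1) (i₀ + 1)) ?_
          rw [ih (i₀ + 1)]
          exact sInf_le (hidx ▸ hmem)
      · -- every infimum term is ≥ sInf S
        refine le_iInf₂ fun i' hi' => ?_
        rw [ih i']
        have hi'le : i' ≤ i₀ := by
          have := Finset.mem_range.mp hi'; omega
        -- the infimum of a nonempty set of ℕ∞ is attained
        obtain ⟨idx, h0, hend, hmono, heq⟩ :=
          csInf_mem (S_nonempty u c i' (j + 1) (by omega))
        set idx2 : ℕ → ℕ := fun k => if k ≤ j + 1 then idx k else i₀ + 1 with hidx2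
        have hmem2 : ((∑ k ∈ Finset.range (j + 2),
            ∑ m ∈ Finset.Icc (idx2 k + 1) (idx2 (k + 1)),
              c m * (u (idx2 (k + 1)) - u m) : ℕ) : ℕ∞) ∈ S u c (i₀ + 1) (j + 2) := by
          refine ⟨idx2, by simp [hidx2, h0], by simp [hidx2], ?_, rfl⟩
          intro k hk
          by_cases hkj : k < j + 1
          · simp only [hidx2, if_pos (by omega : k ≤ j + 1), if_pos (by omega : k + 1 ≤ j + 1)]
            exact hmono k hkj
          · have hk1 : k = j + 1 := by omega
            subst hk1
            simp only [hidx2, if_pos le_rfl, if_neg (by omega : ¬ j + 1 + 1 ≤ j + 1), hend]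
            omega
        refine le_trans (sInf_le hmem2) (le_of_eq ?_)
        rw [heq, ← Nat.cast_add, Nat.cast_inj]
        rw [Finset.sum_range_succ]
        congr 1
        · refine Finset.sum_congr rfl fun k hk => ?_
          have hk' := Finset.mem_range.mp hk
          simp only [hidx2, if_pos (by omega : k ≤ j + 1), if_pos (by omega : k + 1 ≤ j + 1)]
        · simp only [hidx2, if_pos le_rfl, if_neg (by omega : ¬ j + 1 + 1 ≤ j + 1), hend]
          exact tail_eq u c hi'le

end DpAux

/-- the dynamic program computes the minimum inter-interval padding cost
over all bucketings `0 = i₀ ≤ i₁ ≤ ⋯ ≤ i_R = U` of the `U` intervals into at most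
`R` buckets, where the cost of a bucketing is
`∑_{k=1}^{R} ∑_{m=i_{k-1}+1}^{i_k} c_m * (u_{i_k} - u_m)`. -/
theorem dpState_eq_min_inter_interval_padding
    (U : ℕ) (hU : 1 ≤ U) (u c : ℕ → ℕ)
    (hupos : ∀ m, 1 ≤ m → m ≤ U → 0 < u m)
    (humono : ∀ m, 1 ≤ m → m < U → u m < u (m + 1))
    (R : ℕ) (hR1 : 1 ≤ R) (hRU : R ≤ U) :
    dpState u c U R
      = sInf { x : ℕ∞ | ∃ idx : ℕ → ℕ,
          idx 0 = 0 ∧ idx R = U ∧ (∀ k, k < R → idx k ≤ idx (k + 1)) ∧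
          x = ((∑ k ∈ Finset.range R,
                  ∑ m ∈ Finset.Icc (idx k + 1) (idx (k + 1)),
                    c m * (u (idx (k + 1)) - u m) : ℕ) : ℕ∞) } := by
  obtain ⟨r, rfl⟩ : ∃ r, R = r + 1 := ⟨R - 1, by omega⟩
  exact DpAux.dpState_eq u c r U
end
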